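/- arXiv:2211.06879 — 5 statements merged into one kernel-verified Lean document; each statement's English description precedes it below -/
import Mathlib

section
/- If c̄ is the lexicographically minimal multi-index of total degree l with f_{c̄} ≠ 0 among those of degree l, then for every m ≥ 1 the coefficient of f[l]^m at the multi-index m·c̄ equals (f_{c̄})^m. -/
/-- The homogeneous block of total degree `j` of a multivariable power series. -/
noncomputable def block {q : ℕ} {K : Type*} [Field K] (f : MvPowerSeries (Fin q) K) (j : ℕ) :
    MvPowerSeries (Fin q) K :=
  fun c => if c.sum (fun _ n => n) = j then MvPowerSeries.coeff c f else 0

/-!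
Every coefficient of `block f l` below `c̄` in the lexicographic order vanishes, i.e.
`c̄ ≤ lexOrder (block f l)`. The lexicographic order on monomials is compatible with addition,
so in a product the coefficient at a sum of such lower bounds receives a single contribution,
and by induction the coefficient of the `m`-th power at `m • c̄` is the `m`-th power of the
coefficient at `c̄`.
-/

namespace MvPowerSeries

section LexOrder

variable {σ R : Type*} [Semiring R] [LinearOrder σ] [WellFoundedGT σ]

theorem coeff_add_mul_of_le_lexOrder {φ ψ : MvPowerSeries σ R} {p q : σ →₀ ℕ}
    (hp : toLex p ≤ lexOrder φ) (hq : toLex q ≤ lexOrder ψ) :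
    coeff (p + q) (φ * ψ) = coeff p φ * coeff q ψ := by
  rw [coeff_mul, Finset.sum_eq_single_of_mem ⟨p, q⟩ (by simp)]
  rintro ⟨u, v⟩ huv hne
  rw [Finset.HasAntidiagonal.mem_antidiagonal] at huv
  rcases trichotomy_of_add_eq_add (congrArg toLex huv) with h | h | h
  · exact absurd (Prod.ext h.1 h.2) hne
  · rw [coeff_eq_zero_of_lt_lexOrder (lt_of_lt_of_le (WithTop.coe_lt_coe.mpr h) hp), zero_mul]
  · rw [coeff_eq_zero_of_lt_lexOrder (lt_of_lt_of_le (WithTop.coe_lt_coe.mpr h) hq), mul_zero]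

theorem le_lexOrder_pow {φ : MvPowerSeries σ R} {p : σ →₀ ℕ} (hp : toLex p ≤ lexOrder φ)
    (n : ℕ) : toLex (n • p) ≤ lexOrder (φ ^ n) := by
  induction n with
  | zero => simp
  | succ n ih =>
    calc ((toLex ((n + 1) • p) : Lex (σ →₀ ℕ)) : WithTop (Lex (σ →₀ ℕ)))
          = ↑(toLex p) + ↑(toLex (n • p)) := by
          rw [succ_nsmul', toLex_add, WithTop.coe_add]
      _ ≤ lexOrder φ + lexOrder (φ ^ n) := add_le_add hp ih
      _ ≤ lexOrder (φ ^ (n + 1)) := pow_succ' φ n ▸ le_lexOrder_mul φ (φ ^ n)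

theorem coeff_nsmul_pow_of_le_lexOrder {φ : MvPowerSeries σ R} {p : σ →₀ ℕ}
    (hp : toLex p ≤ lexOrder φ) (n : ℕ) : coeff (n • p) (φ ^ n) = coeff p φ ^ n := by
  induction n with
  | zero => simp
  | succ n ih =>
    rw [succ_nsmul', pow_succ', coeff_add_mul_of_le_lexOrder hp (le_lexOrder_pow hp n), ih,
      pow_succ']

end LexOrder

end MvPowerSeries

section Block

variable {q : ℕ} {K : Type*} [Field K]

theorem coeff_block_of_sum_eq (f : MvPowerSeries (Fin q) K) {j : ℕ} {c : Fin q →₀ ℕ}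
    (hc : c.sum (fun _ e => e) = j) : MvPowerSeries.coeff c (block f j) = MvPowerSeries.coeff c f :=
  if_pos hc

theorem le_lexOrder_block {f : MvPowerSeries (Fin q) K} {j : ℕ} {cbar : Fin q →₀ ℕ}
    (hmin : ∀ c : Fin q →₀ ℕ, c.sum (fun _ e => e) = j →
      MvPowerSeries.coeff c f ≠ 0 → ¬ (toLex c < toLex cbar)) :
    toLex cbar ≤ MvPowerSeries.lexOrder (block f j) := by
  refine MvPowerSeries.le_lexOrder_iff.mpr fun c hc => ?_
  by_cases hdeg : c.sum (fun _ e => e) = j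
  · rw [coeff_block_of_sum_eq f hdeg]
    exact not_not.mp fun hne => hmin c hdeg hne (WithTop.coe_lt_coe.mp hc)
  · exact if_neg hdeg

end Block

theorem coeff_block_pow_at_lex_min_general {q : ℕ} {K : Type*} [Field K]
    (f : MvPowerSeries (Fin q) K) (l : ℕ) (cbar : Fin q →₀ ℕ)
    (hdeg : cbar.sum (fun _ e => e) = l)
    (hmin : ∀ c : Fin q →₀ ℕ, c.sum (fun _ e => e) = l →
      MvPowerSeries.coeff c f ≠ 0 → ¬ (toLex c < toLex cbar))
    (m : ℕ) :
    MvPowerSeries.coeff (m • cbar) (block f l ^ m) =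
      (MvPowerSeries.coeff cbar f) ^ m := by
  rw [MvPowerSeries.coeff_nsmul_pow_of_le_lexOrder (le_lexOrder_block hmin),
    coeff_block_of_sum_eq f hdeg]

theorem coeff_block_pow_at_lex_min {q : ℕ} {K : Type*} [Field K]
    (f : MvPowerSeries (Fin q) K) (l : ℕ) (cbar : Fin q →₀ ℕ)
    (hdeg : cbar.sum (fun _ e => e) = l)
    (hne : MvPowerSeries.coeff cbar f ≠ 0)
    (hmin : ∀ c : Fin q →₀ ℕ, c.sum (fun _ e => e) = l →
      MvPowerSeries.coeff c f ≠ 0 → ¬ (toLex c < toLex cbar))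
    (m : ℕ) (hm : 1 ≤ m) :
    MvPowerSeries.coeff (m • cbar) (block f l ^ m) =
      (MvPowerSeries.coeff cbar f) ^ m :=
  coeff_block_pow_at_lex_min_general f l cbar hdeg hmin m
end

section
/- Let A, B, P be one-variable formal power series over ℂ. If A∘P, B∘P, and (AB)∘P all exist, then (A∘P)(B∘P) = (AB)∘P. -/
/-!
Multiply the coefficients of the series by `z ^ n`. For `‖z‖ < 1` all the series involved converge
absolutely, since their terms are bounded, so the Cauchy product rule and a rearrangement give the
identity `∑ⱼ (A ∘ zP)ⱼ (B ∘ zP)ₘ₋ⱼ = ((AB) ∘ zP)ₘ`. By Abel's limit theorem each side tends, as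
`z → 1⁻`, to the corresponding side of the claimed identity.
-/

open Filter Finset Topology PowerSeries

theorem tendsto_atTop_zero_of_tendsto_sum_range {G : Type*} [TopologicalSpace G] [AddCommGroup G]
    [IsTopologicalAddGroup G] {u : ℕ → G} {l : G}
    (h : Tendsto (fun N => ∑ n ∈ range N, u n) atTop (𝓝 l)) : Tendsto u atTop (𝓝 0) := by
  simpa [sum_range_succ] using (h.comp (tendsto_add_atTop_nat 1)).sub h

theorem summable_norm_mul_pow_of_tendsto_sum_range {α : Type*} [NormedDivisionRing α]
    {u : ℕ → α} {l : α} (h : Tendsto (fun N => ∑ n ∈ range N, u n) atTop (𝓝 l))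
    {z : α} (hz : ‖z‖ < 1) : Summable fun n => ‖u n * z ^ n‖ := by
  obtain ⟨C, hC⟩ := (tendsto_atTop_zero_of_tendsto_sum_range h).norm.bddAbove_range
  refine .of_nonneg_of_le (fun _ => norm_nonneg _) (fun n => ?_)
    ((summable_geometric_of_lt_one (norm_nonneg z) hz).mul_left C)
  rw [norm_mul, norm_pow]
  gcongr
  exact hC (Set.mem_range_self n)

theorem coeff_mul_mul_coeff_pow {R : Type*} [CommSemiring R] (A B P : R⟦X⟧) (m n : ℕ) :
    coeff n (A * B) * coeff m (P ^ n) = ∑ kl ∈ antidiagonal n, ∑ j ∈ range (m + 1),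
      coeff kl.1 A * coeff j (P ^ kl.1) * (coeff kl.2 B * coeff (m - j) (P ^ kl.2)) := by
  rw [coeff_mul, sum_mul]
  refine sum_congr rfl fun kl hkl => ?_
  rw [← mem_antidiagonal.mp hkl, pow_add, coeff_mul, Nat.sum_antidiagonal_eq_sum_range_succ_mk,
    mul_sum]
  exact sum_congr rfl fun j _ => by ring

theorem sum_tsum_mul_tsum_coeff_pow {R : Type*} [NormedCommRing R] [CompleteSpace R]
    {A B P : R⟦X⟧} {m : ℕ} {z : R}
    (hA : ∀ j, Summable fun n => ‖coeff n A * coeff j (P ^ n) * z ^ n‖)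
    (hB : ∀ j, Summable fun n => ‖coeff n B * coeff j (P ^ n) * z ^ n‖) :
    ∑ j ∈ range (m + 1), (∑' n, coeff n A * coeff j (P ^ n) * z ^ n) *
      (∑' n, coeff n B * coeff (m - j) (P ^ n) * z ^ n) =
      ∑' n, coeff n (A * B) * coeff m (P ^ n) * z ^ n := by
  calc
    _ = ∑ j ∈ range (m + 1), ∑' n, ∑ kl ∈ antidiagonal n,
          coeff kl.1 A * coeff j (P ^ kl.1) * z ^ kl.1 *
            (coeff kl.2 B * coeff (m - j) (P ^ kl.2) * z ^ kl.2) :=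
      sum_congr rfl fun j _ =>
        tsum_mul_tsum_eq_tsum_sum_antidiagonal_of_summable_norm (hA j) (hB (m - j))
    _ = ∑' n, ∑ j ∈ range (m + 1), ∑ kl ∈ antidiagonal n,
          coeff kl.1 A * coeff j (P ^ kl.1) * z ^ kl.1 *
            (coeff kl.2 B * coeff (m - j) (P ^ kl.2) * z ^ kl.2) :=
      (Summable.tsum_finsetSum fun j _ =>
        (summable_norm_sum_mul_antidiagonal_of_summable_norm (hA j) (hB (m - j))).of_norm).symm
    _ = _ := by
      refine tsum_congr fun n => ?_
      rw [sum_comm, coeff_mul_mul_coeff_pow, sum_mul]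
      refine sum_congr rfl fun kl hkl => ?_
      rw [sum_mul, ← mem_antidiagonal.mp hkl, pow_add]
      exact sum_congr rfl fun j _ => by ring

theorem Complex.eventually_norm_lt_one_map_ofReal_nhdsLT :
    ∀ᶠ z in (𝓝[<] (1 : ℝ)).map ofReal, ‖z‖ < 1 := by
  rw [eventually_map]
  filter_upwards [Ioo_mem_nhdsLT zero_lt_one] with x hx
  rw [norm_real, Real.norm_of_nonneg hx.1.le]
  exact hx.2

theorem right_distributive_law_complex
    (A B P : PowerSeries ℂ) (FA FB FC : ℕ → ℂ)
    (hAP : ∀ m, Tendsto (fun N => ∑ n ∈ Finset.range N,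
      PowerSeries.coeff n A * PowerSeries.coeff m (P ^ n)) atTop (nhds (FA m)))
    (hBP : ∀ m, Tendsto (fun N => ∑ n ∈ Finset.range N,
      PowerSeries.coeff n B * PowerSeries.coeff m (P ^ n)) atTop (nhds (FB m)))
    (hABP : ∀ m, Tendsto (fun N => ∑ n ∈ Finset.range N,
      PowerSeries.coeff n (A * B) * PowerSeries.coeff m (P ^ n)) atTop (nhds (FC m))) :
    ∀ m, ∑ j ∈ Finset.range (m + 1), FA j * FB (m - j) = FC m := by
  intro m
  have abel_lhs := tendsto_finsetSum (range (m + 1)) fun j _ =>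
    (Complex.tendsto_tsum_powerSeries_nhdsWithin_lt (hAP j)).mul
      (Complex.tendsto_tsum_powerSeries_nhdsWithin_lt (hBP (m - j)))
  refine tendsto_nhds_unique (abel_lhs.congr' ?_)
    (Complex.tendsto_tsum_powerSeries_nhdsWithin_lt (hABP m))
  filter_upwards [Complex.eventually_norm_lt_one_map_ofReal_nhdsLT] with z hz
  exact sum_tsum_mul_tsum_coeff_pow
    (fun j => summable_norm_mul_pow_of_tendsto_sum_range (hAP j) hz)
    (fun j => summable_norm_mul_pow_of_tendsto_sum_range (hBP j) hz)
end

section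
/- If Σ a_n, Σ b_n, and their Cauchy product Σ c_n (with c_n = Σ_{k=0}^n a_k b_{n-k}) are all convergent series of complex numbers, then (Σ a_n)(Σ b_n) = Σ c_n. -/
open Filter Finset

open scoped Topology

private lemma summable_norm_aux {a : ℕ → ℂ} {Sa : ℂ}
    (ha : Tendsto (fun N => ∑ n ∈ Finset.range N, a n) atTop (nhds Sa))
    {z : ℂ} (hz : ‖z‖ < 1) : Summable fun n => ‖a n * z ^ n‖ := by
  have h0 : Tendsto a atTop (𝓝 0) := by
    have := (ha.comp (tendsto_add_atTop_nat 1)).sub ha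
    simpa [Finset.sum_range_succ] using this
  have hn : Tendsto (fun n => ‖a n‖) atTop (𝓝 0) := by simpa using h0.norm
  obtain ⟨C, hC⟩ := hn.bddAbove_range
  replace hC : ∀ n, ‖a n‖ ≤ C := fun n => hC (Set.mem_range_self n)
  apply Summable.of_nonneg_of_le (fun n => norm_nonneg _) (fun n => ?_)
    ((summable_geometric_of_lt_one (norm_nonneg z) hz).mul_left C)
  rw [norm_mul, norm_pow]
  exact mul_le_mul_of_nonneg_right (hC n) (by positivity)

theorem abel_cauchy_product
    (a b c : ℕ → ℂ) (Sa Sb Sc : ℂ)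
    (hc : ∀ n, c n = ∑ k ∈ Finset.range (n + 1), a k * b (n - k))
    (ha : Tendsto (fun N => ∑ n ∈ Finset.range N, a n) atTop (nhds Sa))
    (hb : Tendsto (fun N => ∑ n ∈ Finset.range N, b n) atTop (nhds Sb))
    (hcc : Tendsto (fun N => ∑ n ∈ Finset.range N, c n) atTop (nhds Sc)) :
    Sa * Sb = Sc := by
  set L : Filter ℂ := (𝓝[<] (1:ℝ)).map Complex.ofReal with hL
  have hA := Complex.tendsto_tsum_powerSeries_nhdsWithin_lt ha
  have hB := Complex.tendsto_tsum_powerSeries_nhdsWithin_lt hb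
  have hC := Complex.tendsto_tsum_powerSeries_nhdsWithin_lt hcc
  have hNB : L.NeBot := map_neBot
  have heq : (fun z => (∑' n, a n * z ^ n) * (∑' n, b n * z ^ n)) =ᶠ[L]
      (fun z => ∑' n, c n * z ^ n) := by
    rw [hL, eventuallyEq_iff_exists_mem]
    refine ⟨Complex.ofReal '' (Set.Ioo 0 1), Filter.image_mem_map
      (Ioo_mem_nhdsLT_of_mem (by simp)), ?_⟩
    rintro z ⟨x, ⟨hx0, hx1⟩, rfl⟩
    simp only
    have hz : ‖(x:ℂ)‖ < 1 := by
      rw [Complex.norm_real, Real.norm_eq_abs, abs_lt]; constructor <;> linarith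
    rw [tsum_mul_tsum_eq_tsum_sum_range_of_summable_norm
      (summable_norm_aux ha hz) (summable_norm_aux hb hz)]
    congr 1; ext n
    rw [hc, Finset.sum_mul]
    apply Finset.sum_congr rfl
    intro k hk
    rw [Finset.mem_range] at hk
    rw [mul_mul_mul_comm, ← pow_add]
    congr 2
    omega
  exact tendsto_nhds_unique ((hA.mul hB).congr' heq) hC
end

section
/- Let A, B be one-variable formal power series and P a q-variable formal power series, all over ℝ with nonnegative coefficients. If A∘P and B∘P exist, then (AB)∘P exists and (A∘P)(B∘P) = (AB)∘P. -/
/-!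
With nonnegative terms, the series defining `(A∘P)_d` and `(B∘P)_e` converge absolutely, so
their product is the sum of their Cauchy product in the exponent. Summing over `d + e = c` and
exchanging this finite sum with the series yields, term by term, the series defining
`((AB)∘P)_c`, because `(AB)_n (P^n)_c` is exactly the double Cauchy product of the terms.
-/

open Filter Finset

theorem HasSum.sum_mul_antidiagonal_of_nonneg {M : Type*} [AddCommMonoid M] [HasAntidiagonal M]
    {f g : M → ℝ} {a b : ℝ} (hf : HasSum f a) (hg : HasSum g b) (hf0 : 0 ≤ f) (hg0 : 0 ≤ g) :
    HasSum (fun n ↦ ∑ kl ∈ antidiagonal n, f kl.1 * g kl.2) (a * b) := by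
  have hfg := hf.summable.mul_of_nonneg hg.summable hf0 hg0
  rw [← hf.tsum_eq, ← hg.tsum_eq,
    hf.summable.tsum_mul_tsum_eq_tsum_sum_antidiagonal hg.summable hfg]
  exact (summable_sum_mul_antidiagonal_of_summable_mul hfg).hasSum

theorem MvPowerSeries.coeff_pow_nonneg {σ R : Type*} [CommSemiring R] [PartialOrder R]
    [IsOrderedRing R] {P : MvPowerSeries σ R} (hP : ∀ c, 0 ≤ coeff c P) (n : ℕ) (c : σ →₀ ℕ) :
    0 ≤ coeff c (P ^ n) := by
  classical
  induction n generalizing c with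
  | zero =>
    rw [pow_zero, coeff_one]
    split_ifs <;> simp
  | succ n ih =>
    rw [pow_succ, coeff_mul]
    exact sum_nonneg fun p _ ↦ mul_nonneg (ih p.1) (hP p.2)

namespace PowerSeries

variable {σ R : Type*} [CommSemiring R]

/-- The `n`-th summand of the series defining the `c`-th coefficient of `F ∘ P`. -/
noncomputable def compTerm (F : PowerSeries R) (P : MvPowerSeries σ R) (c : σ →₀ ℕ) (n : ℕ) :
    R :=
  coeff n F * MvPowerSeries.coeff c (P ^ n)

theorem compTerm_nonneg [PartialOrder R] [IsOrderedRing R] {F : PowerSeries R}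
    {P : MvPowerSeries σ R} (hF : ∀ n, 0 ≤ coeff n F) (hP : ∀ c, 0 ≤ MvPowerSeries.coeff c P)
    (c : σ →₀ ℕ) : 0 ≤ compTerm F P c :=
  fun n ↦ mul_nonneg (hF n) (MvPowerSeries.coeff_pow_nonneg hP n c)

/-- Expand `(AB)_n` and then `(P ^ (k + l))_c = Σ_{d+e=c} (P ^ k)_d (P ^ l)_e`. -/
theorem compTerm_mul [DecidableEq σ] (A B : PowerSeries R) (P : MvPowerSeries σ R)
    (c : σ →₀ ℕ) :
    compTerm (A * B) P c = fun n ↦ ∑ p ∈ antidiagonal c, ∑ kl ∈ antidiagonal n,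
      compTerm A P p.1 kl.1 * compTerm B P p.2 kl.2 := by
  funext n
  rw [sum_comm, compTerm, coeff_mul, sum_mul]
  refine sum_congr rfl fun kl hkl ↦ ?_
  rw [← mem_antidiagonal.mp hkl, pow_add, MvPowerSeries.coeff_mul, mul_sum]
  exact sum_congr rfl fun p _ ↦ by unfold compTerm; ring

end PowerSeries

open PowerSeries in
theorem mv_right_distributive_law_nonneg {q : ℕ}
    (A B : PowerSeries ℝ) (P : MvPowerSeries (Fin q) ℝ)
    (hA : ∀ n, 0 ≤ PowerSeries.coeff n A)
    (hB : ∀ n, 0 ≤ PowerSeries.coeff n B)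
    (hP : ∀ c : Fin q →₀ ℕ, 0 ≤ MvPowerSeries.coeff c P)
    (FA FB : (Fin q →₀ ℕ) → ℝ)
    (hAP : ∀ c, Tendsto (fun N => ∑ n ∈ Finset.range N,
      PowerSeries.coeff n A * MvPowerSeries.coeff c (P ^ n)) atTop (nhds (FA c)))
    (hBP : ∀ c, Tendsto (fun N => ∑ n ∈ Finset.range N,
      PowerSeries.coeff n B * MvPowerSeries.coeff c (P ^ n)) atTop (nhds (FB c))) :
    ∃ FC : (Fin q →₀ ℕ) → ℝ,
      (∀ c, Tendsto (fun N => ∑ n ∈ Finset.range N,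
        PowerSeries.coeff n (A * B) * MvPowerSeries.coeff c (P ^ n)) atTop (nhds (FC c)))
      ∧ ∀ c : Fin q →₀ ℕ, ∑ p ∈ Finset.HasAntidiagonal.antidiagonal c, FA p.1 * FB p.2 = FC c := by
  have hAP' (c) : HasSum (compTerm A P c) (FA c) :=
    (hasSum_iff_tendsto_nat_of_nonneg (compTerm_nonneg hA hP c) _).mpr (hAP c)
  have hBP' (c) : HasSum (compTerm B P c) (FB c) :=
    (hasSum_iff_tendsto_nat_of_nonneg (compTerm_nonneg hB hP c) _).mpr (hBP c)
  refine ⟨fun c ↦ ∑ p ∈ antidiagonal c, FA p.1 * FB p.2, fun c ↦ ?_, fun c ↦ rfl⟩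
  have hABP : HasSum (compTerm (A * B) P c) (∑ p ∈ antidiagonal c, FA p.1 * FB p.2) := by
    rw [compTerm_mul]
    exact hasSum_sum fun p _ ↦ (hAP' p.1).sum_mul_antidiagonal_of_nonneg (hBP' p.2)
      (compTerm_nonneg hA hP p.1) (compTerm_nonneg hB hP p.2)
  exact hABP.tendsto_sum_nat
end

section
/- Let A, B be one-variable formal power series and P a q-variable formal power series over ℂ. If A∘P, B∘P and (AB)∘P all exist, then (A∘P)(B∘P) = (AB)∘P. -/
/-!
For `‖z‖ < 1` the series defining `A ∘ (z P)` and `B ∘ (z P)` converge absolutely, so the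
Cauchy product and a finite rearrangement give `(A B) ∘ (z P) = (A ∘ (z P)) (B ∘ (z P))`
coefficientwise. Letting `z → 1⁻` along the reals, Abel's limit theorem sends every coefficient
of these three compositions to the corresponding coefficient of `A ∘ P`, `B ∘ P`, `(A B) ∘ P`.
-/

open Filter Finset Topology

namespace PowerSeries

variable {σ R : Type*}

/-- `(g ∘ P)_c = ∑' n, g_n (P ^ n)_c`, with the junk value `0` where this series is not
summable. -/
noncomputable def tsumComp [CommSemiring R] [TopologicalSpace R] (g : PowerSeries R)
    (P : MvPowerSeries σ R) : MvPowerSeries σ R :=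
  fun c => ∑' n, coeff n g * MvPowerSeries.coeff c (P ^ n)

theorem coeff_tsumComp [CommSemiring R] [TopologicalSpace R] (g : PowerSeries R)
    (P : MvPowerSeries σ R) (c : σ →₀ ℕ) :
    MvPowerSeries.coeff c (tsumComp g P) = ∑' n, coeff n g * MvPowerSeries.coeff c (P ^ n) :=
  rfl

theorem sum_antidiagonal_coeff_mul_coeff_pow [CommSemiring R] [DecidableEq σ]
    (A B : PowerSeries R) (P : MvPowerSeries σ R) (c : σ →₀ ℕ) (N : ℕ) :
    ∑ p ∈ antidiagonal c, ∑ kl ∈ antidiagonal N,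
        (coeff kl.1 A * MvPowerSeries.coeff p.1 (P ^ kl.1)) *
          (coeff kl.2 B * MvPowerSeries.coeff p.2 (P ^ kl.2)) =
      coeff N (A * B) * MvPowerSeries.coeff c (P ^ N) := by
  rw [sum_comm, coeff_mul, sum_mul]
  refine sum_congr rfl fun kl hkl => ?_
  rw [← mem_antidiagonal.mp hkl, pow_add, MvPowerSeries.coeff_mul, mul_sum]
  exact sum_congr rfl fun p _ => by ring

theorem tsumComp_mul [NormedCommRing R] [CompleteSpace R] [DecidableEq σ]
    {A B : PowerSeries R} {P : MvPowerSeries σ R}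
    (hA : ∀ a, Summable fun n => ‖coeff n A * MvPowerSeries.coeff a (P ^ n)‖)
    (hB : ∀ b, Summable fun n => ‖coeff n B * MvPowerSeries.coeff b (P ^ n)‖) :
    tsumComp (A * B) P = tsumComp A P * tsumComp B P := by
  ext c
  have cauchy_product : ∀ p : (σ →₀ ℕ) × (σ →₀ ℕ),
      HasSum (fun N => ∑ kl ∈ antidiagonal N,
          (coeff kl.1 A * MvPowerSeries.coeff p.1 (P ^ kl.1)) *
            (coeff kl.2 B * MvPowerSeries.coeff p.2 (P ^ kl.2)))
        (MvPowerSeries.coeff p.1 (tsumComp A P) * MvPowerSeries.coeff p.2 (tsumComp B P)) :=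
    fun p => by
      rw [coeff_tsumComp, coeff_tsumComp,
        tsum_mul_tsum_eq_tsum_sum_antidiagonal_of_summable_norm (hA _) (hB _)]
      exact (summable_norm_sum_mul_antidiagonal_of_summable_norm (hA _) (hB _)).of_norm.hasSum
  rw [MvPowerSeries.coeff_mul, coeff_tsumComp]
  refine HasSum.tsum_eq ?_
  simpa only [sum_antidiagonal_coeff_mul_coeff_pow] using
    hasSum_sum (s := antidiagonal c) fun p _ => cauchy_product p

theorem coeff_mul_coeff_smul_pow [CommSemiring R] (g : PowerSeries R) (P : MvPowerSeries σ R)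
    (z : R) (c : σ →₀ ℕ) (n : ℕ) :
    coeff n g * MvPowerSeries.coeff c ((z • P) ^ n) =
      coeff n g * MvPowerSeries.coeff c (P ^ n) * z ^ n := by
  rw [smul_pow, MvPowerSeries.coeff_smul]
  ring

theorem tendsto_coeff_tsumComp_smul {g : PowerSeries ℂ} {P : MvPowerSeries σ ℂ}
    {c : σ →₀ ℕ} {l : ℂ}
    (h : Tendsto (fun N => ∑ n ∈ range N, coeff n g * MvPowerSeries.coeff c (P ^ n))
      atTop (𝓝 l)) :
    Tendsto (fun z : ℂ => MvPowerSeries.coeff c (tsumComp g (z • P)))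
      ((𝓝[<] (1 : ℝ)).map ((↑) : ℝ → ℂ)) (𝓝 l) := by
  simpa only [coeff_tsumComp, coeff_mul_coeff_smul_pow] using
    Complex.tendsto_tsum_powerSeries_nhdsWithin_lt h

theorem summable_norm_coeff_mul_coeff_smul_pow {g : PowerSeries ℂ} {P : MvPowerSeries σ ℂ}
    {c : σ →₀ ℕ} {l : ℂ}
    (h : Tendsto (fun N => ∑ n ∈ range N, coeff n g * MvPowerSeries.coeff c (P ^ n))
      atTop (𝓝 l)) {z : ℂ} (hz : ‖z‖ < 1) :
    Summable fun n => ‖coeff n g * MvPowerSeries.coeff c ((z • P) ^ n)‖ := by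
  simpa only [coeff_mul_coeff_smul_pow] using
    summable_norm_iff.mpr <| summable_powerSeries_of_norm_lt_one
      (f := fun n => coeff n g * MvPowerSeries.coeff c (P ^ n)) h.cauchySeq hz

end PowerSeries

open PowerSeries in
theorem mv_right_distributive_law_complex {q : ℕ}
    (A B : PowerSeries ℂ) (P : MvPowerSeries (Fin q) ℂ)
    (FA FB FC : (Fin q →₀ ℕ) → ℂ)
    (hAP : ∀ c, Tendsto (fun N => ∑ n ∈ Finset.range N,
      PowerSeries.coeff n A * MvPowerSeries.coeff c (P ^ n)) atTop (nhds (FA c)))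
    (hBP : ∀ c, Tendsto (fun N => ∑ n ∈ Finset.range N,
      PowerSeries.coeff n B * MvPowerSeries.coeff c (P ^ n)) atTop (nhds (FB c)))
    (hABP : ∀ c, Tendsto (fun N => ∑ n ∈ Finset.range N,
      PowerSeries.coeff n (A * B) * MvPowerSeries.coeff c (P ^ n)) atTop (nhds (FC c))) :
    ∀ c : Fin q →₀ ℕ, ∑ p ∈ Finset.HasAntidiagonal.antidiagonal c, FA p.1 * FB p.2 = FC c := by
  intro c
  have in_disc : ∀ᶠ z in (𝓝[<] (1 : ℝ)).map ((↑) : ℝ → ℂ), ‖z‖ < 1 := by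
    refine eventually_map.mpr ?_
    filter_upwards [Ioo_mem_nhdsLT (show (-1 : ℝ) < 1 by norm_num)] with x hx
    rw [Complex.norm_real, Real.norm_eq_abs, abs_lt]
    exact hx
  have distrib : ∀ᶠ z in (𝓝[<] (1 : ℝ)).map ((↑) : ℝ → ℂ),
      MvPowerSeries.coeff c (tsumComp A (z • P) * tsumComp B (z • P)) =
        MvPowerSeries.coeff c (tsumComp (A * B) (z • P)) := by
    filter_upwards [in_disc] with z hz
    rw [tsumComp_mul (fun a => summable_norm_coeff_mul_coeff_smul_pow (hAP a) hz)
      (fun b => summable_norm_coeff_mul_coeff_smul_pow (hBP b) hz)]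
  have product_limit := tendsto_finsetSum (antidiagonal c) fun p _ =>
    (tendsto_coeff_tsumComp_smul (hAP p.1)).mul (tendsto_coeff_tsumComp_smul (hBP p.2))
  simp only [← MvPowerSeries.coeff_mul] at product_limit
  exact tendsto_nhds_unique (product_limit.congr' distrib) (tendsto_coeff_tsumComp_smul (hABP c))
end
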